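/- arXiv:1908.01068 — 2 statements merged into one kernel-verified Lean document; each statement's English description precedes it below -/
import Mathlib

section
/- If f : ℝᵈ × A → ℝ is continuous and nonnegative, F : ℝᵈ × A → ℝ is continuous, nonnegative and coercive (i.e., its sublevel sets are compact), and K ⊆ ℝᵈ is open with f coercive on K × A, then there exists a continuous coercive function F̃ : ℝᵈ × A → ℝ and a constant κ ≥ 1 such that f ≤ F̃ ≤ κ·(1_{B} + f·1_{K̃} + F·1_{K̃ᶜ}) on ℝᵈ × A, where K̃ := (K × A) ∪ {(x,u) : f(x,u) > F(x,u)} and B is any fixed nonempty open ball. -/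
/-!
Take `F̃ = max f (min F g)`, where `g` is a continuous coercive function with `g ≤ f` on `K × A`.
Such a `g` is the distance from `(p, 0)` to the epigraph of `f` over `K × A` (with one extra
point added so that it is never empty): it is `1`-Lipschitz, bounded by `f` on `K × A`, and
small only near points of `K × A` where `f` is small, which form a compact set. Then `F̃ ≥ f`,
`F̃` is coercive because `F` and `g` are, `F̃ ≤ f` on `K × A` and where `f > F`, and `F̃ ≤ F`
elsewhere; so `κ = 1` works.
-/

open Set Metric

theorem isCompact_setOf_max_min_le {X : Type*} [TopologicalSpace X] {f F g : X → ℝ}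
    (hf : Continuous f) (hF : ∀ C : ℝ, IsCompact {p | F p ≤ C})
    (hg : ∀ C : ℝ, IsCompact {p | g p ≤ C}) (C : ℝ) :
    IsCompact {p | max (f p) (min (F p) (g p)) ≤ C} := by
  simp only [max_le_iff, min_le_iff, ofPred_and, ofPred_or]
  exact ((hF C).union (hg C)).inter_left (isClosed_le hf continuous_const)

theorem max_min_le_indicator_add_indicator_compl {X : Type*} {f F g : X → ℝ} {S : Set X}
    (hg : ∀ p ∈ S, g p ≤ f p) (p : X) :
    max (f p) (min (F p) (g p)) ≤
      (S ∪ {q | F q < f q}).indicator f p + (S ∪ {q | F q < f q})ᶜ.indicator F p := by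
  by_cases hp : p ∈ S ∪ {q | F q < f q}
  · rw [indicator_of_mem hp, indicator_of_notMem (notMem_compl_iff.2 hp), add_zero]
    rcases hp with hpS | hFf
    · exact max_le le_rfl ((min_le_right _ _).trans (hg p hpS))
    · exact max_le le_rfl ((min_le_left _ _).trans hFf.le)
  · rw [indicator_of_notMem hp, indicator_of_mem (mem_compl hp), zero_add]
    have hfF : f p ≤ F p := not_lt.1 fun hFf => hp (Or.inr hFf)
    exact max_le hfF (min_le_left _ _)

theorem exists_continuous_coercive_le_on {X : Type*} [MetricSpace X] [ProperSpace X]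
    {S : Set X} {f : X → ℝ} (hf_nonneg : ∀ p ∈ S, 0 ≤ f p)
    (hf : ∀ C : ℝ, IsCompact {p | p ∈ S ∧ f p ≤ C}) :
    ∃ g : X → ℝ, Continuous g ∧ (∀ C : ℝ, IsCompact {p | g p ≤ C}) ∧ ∀ p ∈ S, g p ≤ f p := by
  rcases isEmpty_or_nonempty X with _ | ⟨⟨p₀⟩⟩
  · exact ⟨0, continuous_const, fun C => (toFinite _).isCompact, fun p => isEmptyElim p⟩
  set E : Set (X × ℝ) := insert (p₀, 0) {q | q.1 ∈ S ∧ f q.1 ≤ q.2}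
  have hg_cont : Continuous fun p => infDist (p, (0 : ℝ)) E :=
    (continuous_infDist_pt E).comp (continuous_id.prodMk continuous_const)
  refine ⟨fun p => infDist (p, (0 : ℝ)) E, hg_cont, fun C => ?_, fun p hp => ?_⟩
  · have hsub : {p | infDist (p, (0 : ℝ)) E ≤ C} ⊆
        thickening (C + 1) (insert p₀ {p | p ∈ S ∧ f p ≤ C + 1}) := by
      intro p hp
      obtain ⟨q, hqE, hpq⟩ :=
        (infDist_lt_iff ⟨_, mem_insert _ _⟩).1 (lt_of_le_of_lt hp (lt_add_one C))
      rw [Prod.dist_eq, max_lt_iff, Real.dist_eq, zero_sub, abs_neg] at hpq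
      refine mem_thickening_iff.2 ⟨q.1, ?_, hpq.1⟩
      rcases hqE with rfl | ⟨hqS, hfq⟩
      · exact mem_insert _ _
      · exact mem_insert_of_mem _ ⟨hqS, hfq.trans ((le_abs_self _).trans hpq.2.le)⟩
    exact isCompact_of_isClosed_isBounded (isClosed_le hg_cont continuous_const)
      (((hf (C + 1)).insert p₀).isBounded.thickening.subset hsub)
  · calc infDist (p, (0 : ℝ)) E ≤ dist (p, (0 : ℝ)) (p, f p) :=
          infDist_le_dist_of_mem (mem_insert_of_mem _ ⟨hp, le_rfl⟩)
      _ = f p := by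
          rw [Prod.dist_eq, dist_self, Real.dist_eq, zero_sub, abs_neg,
            abs_of_nonneg (hf_nonneg p hp), max_eq_right (hf_nonneg p hp)]

theorem exists_coercive_dominating_function_general
    (d : ℕ) (A : Type*) [MetricSpace A] [CompactSpace A]
    (f F : (EuclideanSpace ℝ (Fin d)) × A → ℝ)
    (hf_cont : Continuous f) (hf_nonneg : ∀ p, 0 ≤ f p)
    (hF_cont : Continuous F)
    (hF_coercive : ∀ C : ℝ, IsCompact {p : (EuclideanSpace ℝ (Fin d)) × A | F p ≤ C})
    (K : Set (EuclideanSpace ℝ (Fin d)))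
    (hf_coercive_on_K : ∀ C : ℝ,
      IsCompact {p : (EuclideanSpace ℝ (Fin d)) × A | p.1 ∈ K ∧ f p ≤ C})
    (x₀ : EuclideanSpace ℝ (Fin d)) (r : ℝ) :
    ∃ (Ftilde : (EuclideanSpace ℝ (Fin d)) × A → ℝ) (κ : ℝ),
      Continuous Ftilde ∧
      (∀ C : ℝ, IsCompact {p : (EuclideanSpace ℝ (Fin d)) × A | Ftilde p ≤ C}) ∧
      1 ≤ κ ∧
      (∀ p, f p ≤ Ftilde p) ∧
      (∀ p, Ftilde p ≤ κ *
        ((ball x₀ r ×ˢ (univ : Set A)).indicator (fun _ => (1 : ℝ)) p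
          + ((K ×ˢ (univ : Set A)) ∪ {q | f q > F q}).indicator f p
          + (((K ×ˢ (univ : Set A)) ∪ {q | f q > F q})ᶜ).indicator F p)) := by
  obtain ⟨g, hg_cont, hg_coercive, hg_le⟩ :=
    exists_continuous_coercive_le_on (S := Prod.fst ⁻¹' K) (fun p _ => hf_nonneg p)
      hf_coercive_on_K
  refine ⟨fun p => max (f p) (min (F p) (g p)), 1, hf_cont.max (hF_cont.min hg_cont),
    isCompact_setOf_max_min_le hf_cont hF_coercive hg_coercive, le_rfl,
    fun p => le_max_left _ _, fun p => ?_⟩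
  have hball : 0 ≤ (ball x₀ r ×ˢ (univ : Set A)).indicator (fun _ => (1 : ℝ)) p :=
    indicator_nonneg (fun _ _ => zero_le_one) p
  have hbound := max_min_le_indicator_add_indicator_compl (F := F)
    (fun p (hp : p ∈ K ×ˢ (univ : Set A)) => hg_le p hp.1) p
  simp only [one_mul]
  linarith

/-- existence of a continuous coercive function `F̃` and constant `κ ≥ 1`
with `f ≤ F̃ ≤ κ (1_B + f 1_K̃ + F 1_K̃ᶜ)`. -/
theorem exists_coercive_dominating_function
    (d : ℕ) (A : Type*) [MetricSpace A] [CompactSpace A]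
    (f F : (EuclideanSpace ℝ (Fin d)) × A → ℝ)
    (hf_cont : Continuous f) (hf_nonneg : ∀ p, 0 ≤ f p)
    (hF_cont : Continuous F) (hF_nonneg : ∀ p, 0 ≤ F p)
    (hF_coercive : ∀ C : ℝ, IsCompact {p : (EuclideanSpace ℝ (Fin d)) × A | F p ≤ C})
    (K : Set (EuclideanSpace ℝ (Fin d))) (hK : IsOpen K)
    (hf_coercive_on_K : ∀ C : ℝ,
      IsCompact {p : (EuclideanSpace ℝ (Fin d)) × A | p.1 ∈ K ∧ f p ≤ C})
    (x₀ : EuclideanSpace ℝ (Fin d)) (r : ℝ) (hr : 0 < r) :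
    ∃ (Ftilde : (EuclideanSpace ℝ (Fin d)) × A → ℝ) (κ : ℝ),
      Continuous Ftilde ∧
      (∀ C : ℝ, IsCompact {p : (EuclideanSpace ℝ (Fin d)) × A | Ftilde p ≤ C}) ∧
      1 ≤ κ ∧
      (∀ p, f p ≤ Ftilde p) ∧
      (∀ p, Ftilde p ≤ κ *
        ((ball x₀ r ×ˢ (univ : Set A)).indicator (fun _ => (1 : ℝ)) p
          + ((K ×ˢ (univ : Set A)) ∪ {q | f q > F q}).indicator f p
          + (((K ×ˢ (univ : Set A)) ∪ {q | f q > F q})ᶜ).indicator F p)) :=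
  exists_coercive_dominating_function_general d A f F hf_cont hf_nonneg hF_cont hF_coercive K
    hf_coercive_on_K x₀ r
end

section
/- Let ν be a finite Borel measure on ℝᵈ, m̃ ≥ 1, and F̃ ∈ C²(ℝᵈ) with F̃ ≥ 1, at most polynomial growth of degree m̃, and satisfying |x||∇F̃(x)| + |x|²‖∇²F̃(x)‖ ∈ O(F̃). Suppose further ∫ |z|^{m̃} ν(dz) < ∞ and ∫_{B₁} |z|² ν(dz) < ∞. Then the compensated nonlocal operator I F̃(x) := ∫_{ℝᵈ∖{0}} (F̃(x+y) − F̃(x) − ⟨y, ∇F̃(x)⟩) ν(dy) satisfies I F̃ ∈ O(F̃): there exists C with |I F̃(x)| ≤ C(1 + F̃(x)) for all x. -/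
/-!
Taylor's formula with the Hessian bound handles `‖y‖ ≤ (1 + ‖x‖)/2`: on that segment
`1 + ‖x + t y‖` is comparable to `1 + ‖x‖`, and the gradient bound `(1 + ‖z‖)‖∇F(z)‖ ≲ 1 + F(z)`
with Grönwall's inequality keeps `1 + F` comparable to `1 + F(x)`, so the remainder is
`≲ (1 + F(x)) ‖y‖² / (1 + ‖x‖)² ≲ 1 + F(x)`. For larger `y` each of the three terms is bounded
separately by the polynomial growth, giving `≲ (1 + ‖y‖^m)(1 + F(x))`, which is `ν`-integrable.
-/

open MeasureTheory Metric Set Real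

theorem exists_one_add_norm_pow_mul_norm_le {E G : Type*} [NormedAddCommGroup E] [ProperSpace E]
    [NormedAddCommGroup G] {φ : E → G} (hφ : Continuous φ)
    {w : E → ℝ} (hw : ∀ z, 1 ≤ w z) (k : ℕ) {C : ℝ} (h : ∀ z, ‖z‖ ^ k * ‖φ z‖ ≤ C * w z) :
    ∃ A, 0 ≤ A ∧ ∀ z, (1 + ‖z‖) ^ k * ‖φ z‖ ≤ A * w z := by
  obtain ⟨M, hM⟩ := (isCompact_closedBall (0 : E) 1).exists_bound_of_continuousOn hφ.continuousOn
  refine ⟨2 ^ k * (max M 0 + max C 0), by positivity, fun z => ?_⟩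
  have hw0 : 0 ≤ w z := zero_le_one.trans (hw z)
  rcases le_or_gt ‖z‖ 1 with hz | hz
  · calc (1 + ‖z‖) ^ k * ‖φ z‖ ≤ 2 ^ k * max M 0 := by
          gcongr
          · linarith
          · exact (hM z (by simpa using hz)).trans (le_max_left _ _)
      _ ≤ 2 ^ k * (max M 0 + max C 0) * 1 := by
          rw [mul_one]; gcongr; exact le_add_of_nonneg_right (le_max_right _ _)
      _ ≤ 2 ^ k * (max M 0 + max C 0) * w z := by gcongr; exact hw z
  · calc (1 + ‖z‖) ^ k * ‖φ z‖ ≤ 2 ^ k * (‖z‖ ^ k * ‖φ z‖) := by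
          rw [← mul_assoc, ← mul_pow]; gcongr; linarith
      _ ≤ 2 ^ k * (max C 0 * w z) := by
          gcongr 2 ^ k * ?_
          exact (h z).trans (by gcongr; exact le_max_left _ _)
      _ ≤ 2 ^ k * (max M 0 + max C 0) * w z := by
          rw [← mul_assoc]; gcongr; exact le_add_of_nonneg_left (le_max_right _ _)

section Calculus

variable {E G : Type*} [NormedAddCommGroup E] [NormedSpace ℝ E]
  [NormedAddCommGroup G] [NormedSpace ℝ G]

theorem norm_sub_sub_fderiv_le_of_norm_fderiv_fderiv_le {f : E → G}
    (hf : Differentiable ℝ f) (hf' : Differentiable ℝ (fderiv ℝ f)) {x y : E} {B : ℝ}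
    (hB : ∀ z ∈ segment ℝ x (x + y), ‖fderiv ℝ (fderiv ℝ f) z‖ ≤ B) :
    ‖f (x + y) - f x - fderiv ℝ f x y‖ ≤ B * ‖y‖ ^ 2 := by
  have hB0 : 0 ≤ B := (norm_nonneg (fderiv ℝ (fderiv ℝ f) x)).trans (hB x (left_mem_segment ℝ _ _))
  have hdf : ∀ z ∈ segment ℝ x (x + y), ‖fderiv ℝ f z - fderiv ℝ f x‖ ≤ B * ‖y‖ := fun z hz =>
    calc ‖fderiv ℝ f z - fderiv ℝ f x‖ ≤ B * ‖z - x‖ :=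
          (convex_segment _ _).norm_image_sub_le_of_norm_fderiv_le (fun w _ => hf' w) hB
            (left_mem_segment ℝ _ _) hz
      _ ≤ B * ‖y‖ := by
          gcongr
          simpa using norm_sub_le_of_mem_segment hz
  have := (convex_segment _ _).norm_image_sub_le_of_norm_fderiv_le' (fun w _ => hf w) hdf
    (left_mem_segment ℝ _ _) (right_mem_segment ℝ _ _)
  simpa [pow_two, mul_assoc] using this

theorem norm_image_add_smul_le_mul_exp {f : E → G} (hf : Differentiable ℝ f) {x y : E} {K : ℝ}
    (hK : ∀ t ∈ Icc (0 : ℝ) 1, ‖fderiv ℝ f (x + t • y) y‖ ≤ K * ‖f (x + t • y)‖) :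
    ∀ t ∈ Icc (0 : ℝ) 1, ‖f (x + t • y)‖ ≤ ‖f x‖ * exp (K * t) := by
  have hline (t : ℝ) : HasDerivAt (fun t : ℝ => x + t • y) y t := by
    simpa using ((hasDerivAt_id t).smul_const y).const_add x
  have hderiv (t : ℝ) : HasDerivAt (fun t => f (x + t • y)) (fderiv ℝ f (x + t • y) y) t :=
    (hf _).hasFDerivAt.comp_hasDerivAt t (hline t)
  intro t ht
  simpa [gronwallBound_ε0] using
    norm_le_gronwallBound_of_norm_deriv_right_le (δ := ‖f x‖) (K := K) (ε := 0)
    (fun t _ => (hderiv t).continuousAt.continuousWithinAt)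
    (fun t _ => (hderiv t).hasDerivWithinAt) (by simp)
    (fun s hs => by simpa using hK s (Ico_subset_Icc_self hs)) t ht

theorem one_add_norm_le_two_mul_one_add_norm_add_smul {x y : E} (hy : ‖y‖ ≤ (1 + ‖x‖) / 2)
    {t : ℝ} (ht : t ∈ Icc (0 : ℝ) 1) : 1 + ‖x‖ ≤ 2 * (1 + ‖x + t • y‖) := by
  have hty : ‖t • y‖ ≤ ‖y‖ := by
    rw [norm_smul, Real.norm_of_nonneg ht.1]
    exact mul_le_of_le_one_left (norm_nonneg y) ht.2
  have := norm_sub_le (x + t • y) (t • y)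
  rw [add_sub_cancel_right] at this
  linarith

variable {F : E → ℝ}

theorem one_add_apply_add_smul_le_exp_mul (hF : Differentiable ℝ F) (hF0 : ∀ z, 0 ≤ F z)
    {A : ℝ} (hA : 0 ≤ A) (h₁ : ∀ z, (1 + ‖z‖) * ‖fderiv ℝ F z‖ ≤ A * (1 + F z))
    {x y : E} (hy : ‖y‖ ≤ (1 + ‖x‖) / 2) {t : ℝ} (ht : t ∈ Icc (0 : ℝ) 1) :
    1 + F (x + t • y) ≤ exp A * (1 + F x) := by
  have hpos (z : E) : 0 < 1 + F z := by linarith [hF0 z]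
  have hgrad (s : ℝ) (hs : s ∈ Icc (0 : ℝ) 1) :
      ‖fderiv ℝ (fun z => 1 + F z) (x + s • y) y‖ ≤ A * ‖1 + F (x + s • y)‖ := by
    rw [fderiv_const_add, Real.norm_of_nonneg (hpos _).le]
    calc ‖fderiv ℝ F (x + s • y) y‖ ≤ ‖fderiv ℝ F (x + s • y)‖ * ‖y‖ :=
          (fderiv ℝ F (x + s • y)).le_opNorm y
      _ ≤ ‖fderiv ℝ F (x + s • y)‖ * (1 + ‖x + s • y‖) := by
          gcongr; linarith [one_add_norm_le_two_mul_one_add_norm_add_smul hy hs]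
      _ ≤ A * (1 + F (x + s • y)) := by rw [mul_comm]; exact h₁ _
  have := norm_image_add_smul_le_mul_exp (hF.const_add 1) hgrad t ht
  rw [Real.norm_of_nonneg (hpos _).le, Real.norm_of_nonneg (hpos _).le] at this
  calc 1 + F (x + t • y) ≤ (1 + F x) * exp (A * t) := this
    _ ≤ (1 + F x) * exp A :=
        mul_le_mul_of_nonneg_left (exp_le_exp.2 (by nlinarith [ht.1, ht.2])) (hpos x).le
    _ = exp A * (1 + F x) := mul_comm _ _

theorem abs_sub_sub_fderiv_le_of_norm_le_half (hF : ContDiff ℝ 2 F) (hF0 : ∀ z, 0 ≤ F z)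
    {A : ℝ} (hA : 0 ≤ A)
    (h₁ : ∀ z, (1 + ‖z‖) * ‖fderiv ℝ F z‖ ≤ A * (1 + F z))
    (h₂ : ∀ z, (1 + ‖z‖) ^ 2 * ‖fderiv ℝ (fderiv ℝ F) z‖ ≤ A * (1 + F z))
    {x y : E} (hy : ‖y‖ ≤ (1 + ‖x‖) / 2) :
    |F (x + y) - F x - fderiv ℝ F x y| ≤ A * exp A * (1 + F x) := by
  have hdF : Differentiable ℝ F := hF.differentiable (by norm_num)
  have hdF' : Differentiable ℝ (fderiv ℝ F) :=
    (hF.fderiv_right (m := 1) (by norm_num)).differentiable (by norm_num)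
  have hB : ∀ z ∈ segment ℝ x (x + y),
      ‖fderiv ℝ (fderiv ℝ F) z‖ ≤ 4 * (A * exp A * (1 + F x)) / (1 + ‖x‖) ^ 2 := by
    rw [segment_eq_image']
    rintro _ ⟨t, ht, rfl⟩
    rw [add_sub_cancel_left, le_div_iff₀ (by positivity)]
    calc ‖fderiv ℝ (fderiv ℝ F) (x + t • y)‖ * (1 + ‖x‖) ^ 2
        ≤ ‖fderiv ℝ (fderiv ℝ F) (x + t • y)‖ * (2 * (1 + ‖x + t • y‖)) ^ 2 := by
          gcongr; exact one_add_norm_le_two_mul_one_add_norm_add_smul hy ht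
      _ = 4 * ((1 + ‖x + t • y‖) ^ 2 * ‖fderiv ℝ (fderiv ℝ F) (x + t • y)‖) := by ring
      _ ≤ 4 * (A * (exp A * (1 + F x))) := by
          gcongr 4 * ?_
          exact (h₂ _).trans (mul_le_mul_of_nonneg_left
            (one_add_apply_add_smul_le_exp_mul hdF hF0 hA h₁ hy ht) hA)
      _ = 4 * (A * exp A * (1 + F x)) := by ring
  have hB0 : 0 ≤ A * exp A * (1 + F x) := mul_nonneg (by positivity) (by linarith [hF0 x])
  calc |F (x + y) - F x - fderiv ℝ F x y|
      ≤ 4 * (A * exp A * (1 + F x)) / (1 + ‖x‖) ^ 2 * ‖y‖ ^ 2 :=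
        norm_sub_sub_fderiv_le_of_norm_fderiv_fderiv_le hdF hdF' hB
    _ ≤ 4 * (A * exp A * (1 + F x)) / (1 + ‖x‖) ^ 2 * ((1 + ‖x‖) / 2) ^ 2 := by gcongr
    _ = A * exp A * (1 + F x) := by field_simp; ring

theorem le_one_add_rpow {r m : ℝ} (hr : 0 ≤ r) (hm : 1 ≤ m) : r ≤ 1 + r ^ m := by
  rcases le_or_gt r 1 with h | h
  · linarith [rpow_nonneg hr m]
  · linarith [self_le_rpow_of_one_le h.le hm]

theorem abs_sub_sub_fderiv_le_of_half_lt_norm {m C₀ A : ℝ} (hm : 1 ≤ m) (hC₀ : 0 ≤ C₀)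
    (hgrowth : ∀ z, |F z| ≤ C₀ * (1 + ‖z‖ ^ m)) {x y : E} (hFx : 0 ≤ F x)
    (hDx : ‖fderiv ℝ F x‖ ≤ A * (1 + F x)) (hy : (1 + ‖x‖) / 2 < ‖y‖) :
    |F (x + y) - F x - fderiv ℝ F x y| ≤
      (C₀ + 1 + A + (C₀ * 3 ^ m + A) * ‖y‖ ^ m) * (1 + F x) := by
  have hxy : ‖x + y‖ ^ m ≤ 3 ^ m * ‖y‖ ^ m := by
    rw [← mul_rpow (by norm_num) (norm_nonneg _)]
    gcongr
    linarith [norm_add_le x y]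
  have hFxy : |F (x + y)| ≤ C₀ + C₀ * 3 ^ m * ‖y‖ ^ m := by
    have := hgrowth (x + y); nlinarith
  have hDxy : |fderiv ℝ F x y| ≤ A * (1 + F x) * (1 + ‖y‖ ^ m) :=
    calc |fderiv ℝ F x y| ≤ ‖fderiv ℝ F x‖ * ‖y‖ := (fderiv ℝ F x).le_opNorm y
      _ ≤ A * (1 + F x) * (1 + ‖y‖ ^ m) :=
        mul_le_mul hDx (le_one_add_rpow (norm_nonneg y) hm) (norm_nonneg y)
          ((norm_nonneg _).trans hDx)
  have hyR : 0 ≤ C₀ * 3 ^ m * ‖y‖ ^ m := by positivity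
  calc |F (x + y) - F x - fderiv ℝ F x y| ≤ |F (x + y)| + |F x| + |fderiv ℝ F x y| :=
        (abs_sub _ _).trans (by gcongr; exact abs_sub _ _)
    _ ≤ _ := by
        rw [abs_of_nonneg hFx]
        nlinarith [mul_nonneg hC₀ hFx, mul_nonneg hyR hFx]

theorem exists_weighted_fderiv_bounds [ProperSpace E] (hF : ContDiff ℝ 2 F)
    (hF0 : ∀ z, 0 ≤ F z) {C : ℝ}
    (hC : ∀ z, ‖z‖ * ‖fderiv ℝ F z‖ + ‖z‖ ^ 2 * ‖fderiv ℝ (fderiv ℝ F) z‖ ≤ C * (1 + F z)) :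
    ∃ A, 0 ≤ A ∧ (∀ z, (1 + ‖z‖) * ‖fderiv ℝ F z‖ ≤ A * (1 + F z)) ∧
      ∀ z, (1 + ‖z‖) ^ 2 * ‖fderiv ℝ (fderiv ℝ F) z‖ ≤ A * (1 + F z) := by
  have hw (z : E) : 1 ≤ 1 + F z := le_add_of_nonneg_right (hF0 z)
  have hDF : ContDiff ℝ 1 (fderiv ℝ F) := hF.fderiv_right (by norm_num)
  obtain ⟨A₁, hA₁, h₁⟩ := exists_one_add_norm_pow_mul_norm_le hDF.continuous hw 1 fun z => by
    have := hC z
    rw [pow_one]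
    nlinarith [norm_nonneg (fderiv ℝ (fderiv ℝ F) z)]
  obtain ⟨A₂, hA₂, h₂⟩ := exists_one_add_norm_pow_mul_norm_le
      (hDF.continuous_fderiv one_ne_zero) hw 2 fun z => by
    have := hC z
    nlinarith [norm_nonneg z, norm_nonneg (fderiv ℝ F z)]
  have hmax (z : E) {a : ℝ} (ha : a ≤ max A₁ A₂) : a * (1 + F z) ≤ max A₁ A₂ * (1 + F z) :=
    mul_le_mul_of_nonneg_right ha (zero_le_one.trans (hw z))
  refine ⟨max A₁ A₂, le_max_of_le_left hA₁, fun z => ?_, fun z => ?_⟩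
  · simpa using (h₁ z).trans (hmax z (le_max_left _ _))
  · exact (h₂ z).trans (hmax z (le_max_right _ _))

theorem abs_sub_sub_fderiv_le (hF : ContDiff ℝ 2 F) (hF0 : ∀ z, 0 ≤ F z) {m C₀ A : ℝ}
    (hm : 1 ≤ m) (hC₀ : 0 ≤ C₀) (hgrowth : ∀ z, |F z| ≤ C₀ * (1 + ‖z‖ ^ m)) (hA : 0 ≤ A)
    (h₁ : ∀ z, (1 + ‖z‖) * ‖fderiv ℝ F z‖ ≤ A * (1 + F z))
    (h₂ : ∀ z, (1 + ‖z‖) ^ 2 * ‖fderiv ℝ (fderiv ℝ F) z‖ ≤ A * (1 + F z)) (x y : E) :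
    |F (x + y) - F x - fderiv ℝ F x y| ≤
      (A * exp A + C₀ + 1 + A + (C₀ * 3 ^ m + A) * ‖y‖ ^ m) * (1 + F x) := by
  rcases le_or_gt ‖y‖ ((1 + ‖x‖) / 2) with hy | hy
  · refine (abs_sub_sub_fderiv_le_of_norm_le_half hF hF0 hA h₁ h₂ hy).trans ?_
    have : 0 ≤ (C₀ + 1 + A + (C₀ * 3 ^ m + A) * ‖y‖ ^ m) * (1 + F x) := by
      have := hF0 x; positivity
    nlinarith
  · have hDx : ‖fderiv ℝ F x‖ ≤ A * (1 + F x) :=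
      (le_mul_of_one_le_left (norm_nonneg _) (by simp)).trans (h₁ x)
    refine (abs_sub_sub_fderiv_le_of_half_lt_norm hm hC₀ hgrowth (hF0 x) hDx hy).trans ?_
    have : 0 ≤ A * exp A * (1 + F x) := by have := hF0 x; positivity
    nlinarith

end Calculus

theorem norm_setIntegral_le_integral_of_norm_le {X G : Type*} [MeasurableSpace X]
    [NormedAddCommGroup G] [NormedSpace ℝ G] {ν : Measure X} {g : X → G} {φ : X → ℝ}
    (hφ : Integrable φ ν) (hg : ∀ y, ‖g y‖ ≤ φ y) (s : Set X) :
    ‖∫ y in s, g y ∂ν‖ ≤ ∫ y, φ y ∂ν :=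
  (norm_integral_le_of_norm_le hφ.restrict (ae_of_all _ hg)).trans
    (setIntegral_le_integral hφ (ae_of_all _ fun y => (norm_nonneg _).trans (hg y)))

theorem compensated_nonlocal_O_of_F_general
    (d : ℕ) (ν : Measure (EuclideanSpace ℝ (Fin d))) [IsFiniteMeasure ν]
    (mt : ℝ) (hmt : 1 ≤ mt)
    (F : EuclideanSpace ℝ (Fin d) → ℝ)
    (hF_smooth : ContDiff ℝ 2 F)
    (hF_ge_one : ∀ x, 1 ≤ F x)
    (C₀ : ℝ) (hF_growth : ∀ x, |F x| ≤ C₀ * (1 + ‖x‖ ^ mt))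
    (C₁ : ℝ) (hF_derivs : ∀ x,
      ‖x‖ * ‖fderiv ℝ F x‖ + ‖x‖ ^ 2 * ‖fderiv ℝ (fderiv ℝ F) x‖ ≤ C₁ * (1 + F x))
    (hmom : Integrable (fun z => ‖z‖ ^ mt) ν) :
    ∃ C : ℝ, ∀ x,
      |∫ y in ({0}ᶜ : Set (EuclideanSpace ℝ (Fin d))),
        (F (x + y) - F x - fderiv ℝ F x y) ∂ν| ≤ C * (1 + F x) := by
  have hF0 (z : EuclideanSpace ℝ (Fin d)) : 0 ≤ F z := zero_le_one.trans (hF_ge_one z)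
  obtain ⟨A, hA, h₁, h₂⟩ := exists_weighted_fderiv_bounds hF_smooth hF0 hF_derivs
  have hC₀ : 0 ≤ C₀ :=
    nonneg_of_mul_nonneg_left ((abs_nonneg _).trans (hF_growth 0)) (by positivity)
  have hbound := abs_sub_sub_fderiv_le hF_smooth hF0 hmt hC₀ hF_growth hA h₁ h₂
  set P := A * exp A + C₀ + 1 + A
  set Q := C₀ * 3 ^ mt + A
  refine ⟨P * ν.real univ + Q * ∫ z, ‖z‖ ^ mt ∂ν, fun x => ?_⟩
  have hint : Integrable (fun y => (P + Q * ‖y‖ ^ mt) * (1 + F x)) ν :=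
    ((integrable_const P).add (hmom.const_mul Q)).mul_const _
  refine (norm_setIntegral_le_integral_of_norm_le
    (g := fun y => F (x + y) - F x - fderiv ℝ F x y) hint (hbound x) _).trans_eq ?_
  rw [integral_mul_const, integral_add (integrable_const P) (hmom.const_mul Q),
    integral_const, integral_const_mul, smul_eq_mul, mul_comm P]

/-- if `F̃ ∈ C²`, `F̃ ≥ 1`, has polynomial growth of degree `m̃` and satisfies
`|x||∇F̃(x)| + |x|²‖∇²F̃(x)‖ ∈ O(F̃)`, and `ν` is finite with `∫ |z|^m̃ ν(dz) < ∞` and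
`∫_{B₁} |z|² ν(dz) < ∞`, then the compensated nonlocal term
`I F̃(x) = ∫_{ℝᵈ∖{0}} (F̃(x+y) − F̃(x) − ⟨y,∇F̃(x)⟩) ν(dy)` satisfies `I F̃ ∈ O(F̃)`. -/
theorem compensated_nonlocal_O_of_F
    (d : ℕ) (ν : Measure (EuclideanSpace ℝ (Fin d))) [IsFiniteMeasure ν]
    (mt : ℝ) (hmt : 1 ≤ mt)
    (F : EuclideanSpace ℝ (Fin d) → ℝ)
    (hF_smooth : ContDiff ℝ 2 F)
    (hF_ge_one : ∀ x, 1 ≤ F x)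
    (C₀ : ℝ) (hF_growth : ∀ x, |F x| ≤ C₀ * (1 + ‖x‖ ^ mt))
    (C₁ : ℝ) (hF_derivs : ∀ x,
      ‖x‖ * ‖fderiv ℝ F x‖ + ‖x‖ ^ 2 * ‖fderiv ℝ (fderiv ℝ F) x‖ ≤ C₁ * (1 + F x))
    (hmom : Integrable (fun z => ‖z‖ ^ mt) ν)
    (hmom2 : Integrable (fun z => ‖z‖ ^ 2)
      (ν.restrict (ball (0 : EuclideanSpace ℝ (Fin d)) 1))) :
    ∃ C : ℝ, ∀ x,
      |∫ y in ({0}ᶜ : Set (EuclideanSpace ℝ (Fin d))),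
        (F (x + y) - F x - fderiv ℝ F x y) ∂ν| ≤ C * (1 + F x) :=
  compensated_nonlocal_O_of_F_general d ν mt hmt F hF_smooth hF_ge_one C₀ hF_growth C₁ hF_derivs
    hmom
end
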